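/- Let a ∈ 𝒜, ξ ∈ ℝ with |ξ| ≥ 1, and let f : 𝕋 → ℂ be bounded measurable. If u is a periodic W^{2,1} function with −u'' + iξ a u = a f a.e., then ‖u‖_{H¹_a} ≤ √2 |ξ|^{−1/2} [f]_a; consequently there is a constant C, independent of a, ξ and f, such that ‖u‖_{H¹} ≤ C |ξ|^{−1/2} [f]_a. -/

import Mathlib

open MeasureTheory Set Complex

noncomputable section

/-- `a ∈ 𝒜`: a measurable 1-periodic function (a function on the torus `𝕋`),
nonnegative a.e., integrable over one period, with `∫ a = 1`. -/
def MemA (a : ℝ → ℝ) : Prop :=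
  Measurable a ∧ (∀ x, a (x + 1) = a x) ∧ (∀ᵐ x : ℝ, 0 ≤ a x) ∧
    IntegrableOn a (Ioc 0 1) ∧ (∫ x in Ioc (0:ℝ) 1, a x) = 1

/-- A periodic `W^{2,1}` function: a 1-periodic continuously differentiable
`u : ℝ → ℂ` whose derivative is absolutely continuous with (periodic) second
derivative `u'' ∈ L¹(𝕋)`. -/
def IsPeriodicW21 (u u'' : ℝ → ℂ) : Prop :=
  (∀ x, u (x + 1) = u x) ∧ (∀ x, u'' (x + 1) = u'' x) ∧
  ContDiff ℝ 1 u ∧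
  (∀ x, deriv u x = deriv u 0 + ∫ t in (0:ℝ)..x, u'' t) ∧
  IntegrableOn u'' (Ioc 0 1)

/-- The seminorm `[f]_a = (∫ a |f|²)^{1/2}`. -/
def seminormA (a : ℝ → ℝ) (f : ℝ → ℂ) : ℝ :=
  Real.sqrt (∫ x in Ioc (0:ℝ) 1, a x * ‖f x‖ ^ 2)

open ComplexConjugate

/-!
Testing the equation against `ū` and integrating by parts over a period gives the energy identity
`∫ a f ū = ‖u'‖² + iξ [u]_a²`. Both `‖u'‖²` and `|ξ| [u]_a²` are then bounded by `|∫ a f ū|`, which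
AM–GM with weight `|ξ|` bounds by `(|ξ|⁻¹ [f]_a² + |ξ| [u]_a²) / 2`; solving first for `[u]_a²` and
then for `‖u'‖²` gives `‖u‖²_{H¹_a} ≤ 2 |ξ|⁻¹ [f]_a²`. For the unweighted norm, `∫ a = 1` forces
`min |u| ≤ [u]_a`, and `|u(x) - u(y)| ≤ ‖u'‖_{L¹} ≤ ‖u'‖_{L²}` then gives `‖u‖²_{L²} ≤ 2 ‖u‖²_{H¹_a}`.
-/

section IntegrationByParts

variable {𝕜 : Type*} [RCLike 𝕜] {a b : ℝ}

theorem setIntegral_mul_setIntegral_Ioc_comm {g φ : ℝ → 𝕜}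
    (hg : IntegrableOn g (Ioc a b)) (hφ : IntegrableOn φ (Ioc a b)) :
    ∫ x in Ioc a b, g x * ∫ t in Ioc x b, φ t = ∫ t in Ioc a b, (∫ x in Ioc a t, g x) * φ t := by
  set μ := volume.restrict (Ioc a b)
  let F : ℝ → ℝ → 𝕜 := fun x t => {p : ℝ × ℝ | p.1 ≤ p.2}.indicator (fun p => g p.1 * φ p.2) (x, t)
  have hF : Integrable (Function.uncurry F) (μ.prod μ) :=
    (hg.mul_prod hφ).indicator (measurableSet_le measurable_fst measurable_snd)
  have inner_t : ∀ x ∈ Ioc a b, ∫ t, F x t ∂μ = g x * ∫ t in Ioc x b, φ t := by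
    intro x hx
    have : ∀ t, F x t = (Ici x).indicator (fun t => g x * φ t) t := fun t => by
      simp [F, indicator_apply]
    simp_rw [this]
    rw [setIntegral_indicator measurableSet_Ici, integral_const_mul,
      show Ioc a b ∩ Ici x = Icc x b by grind, integral_Icc_eq_integral_Ioc]
  have inner_x : ∀ t ∈ Ioc a b, ∫ x, F x t ∂μ = (∫ x in Ioc a t, g x) * φ t := by
    intro t ht
    have : ∀ x, F x t = (Iic t).indicator (fun x => g x * φ t) x := fun x => by
      simp [F, indicator_apply]
    simp_rw [this]
    rw [setIntegral_indicator measurableSet_Iic, integral_mul_const,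
      show Ioc a b ∩ Iic t = Ioc a t by grind]
  calc ∫ x in Ioc a b, g x * ∫ t in Ioc x b, φ t
      = ∫ x, ∫ t, F x t ∂μ ∂μ := (setIntegral_congr_fun measurableSet_Ioc inner_t).symm
    _ = ∫ t, ∫ x, F x t ∂μ ∂μ := integral_integral_swap hF
    _ = _ := setIntegral_congr_fun measurableSet_Ioc inner_x

/-- Here `v` is merely absolutely continuous, so the proof goes through Fubini on the triangle
`x ≤ t` instead of the product rule. -/
theorem setIntegral_mul_eq_sub_of_eq_add_integral (hab : a ≤ b) {g v w w' : ℝ → 𝕜}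
    (hg : IntegrableOn g (Ioc a b)) (hv : ∀ x ∈ Icc a b, v x = v a + ∫ t in a..x, g t)
    (hw : ∀ x ∈ Icc a b, HasDerivAt w (w' x) x) (hw' : IntegrableOn w' (Ioc a b)) :
    ∫ x in Ioc a b, g x * w x = v b * w b - v a * w a - ∫ x in Ioc a b, v x * w' x := by
  have hIcc : uIcc a b = Icc a b := uIcc_of_le hab
  have hw_cont : ContinuousOn w (Icc a b) := fun x hx => (hw x hx).continuousAt.continuousWithinAt
  have hv_cont : ContinuousOn v (Icc a b) := by
    have hg' : IntegrableOn g (uIcc a b) := by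
      rw [hIcc]; exact (integrableOn_Icc_iff_integrableOn_Ioc (f := g)).2 hg
    have := intervalIntegral.continuousOn_primitive_interval hg'
    rw [hIcc] at this
    exact (continuousOn_const.add this).congr hv
  have ftc_w : ∀ x ∈ Icc a b, ∫ t in Ioc x b, w' t = w b - w x := fun x hx => by
    rw [← intervalIntegral.integral_of_le hx.2]
    refine intervalIntegral.integral_eq_sub_of_hasDerivAt (fun t ht => hw t ?_) ?_
    · rw [uIcc_of_le hx.2] at ht; exact ⟨hx.1.trans ht.1, ht.2⟩
    · exact (intervalIntegrable_iff_integrableOn_Ioc_of_le hx.2).2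
        (hw'.mono_set (Ioc_subset_Ioc_left hx.1))
  have ftc_v : ∀ t ∈ Icc a b, ∫ x in Ioc a t, g x = v t - v a := fun t ht => by
    rw [hv t ht, intervalIntegral.integral_of_le ht.1]; ring
  have hgw : IntegrableOn (fun x => g x * (w b - w x)) (Ioc a b) :=
    hg.mul_continuousOn_of_subset (continuousOn_const.sub hw_cont) measurableSet_Ioc
      isCompact_Icc Ioc_subset_Icc_self
  have hvw' : IntegrableOn (fun x => v x * w' x) (Ioc a b) :=
    IntegrableOn.continuousOn_mul_of_subset hv_cont hw' isCompact_Icc measurableSet_Ioc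
      Ioc_subset_Icc_self
  calc ∫ x in Ioc a b, g x * w x
      = ∫ x in Ioc a b, (g x * w b - g x * (w b - w x)) := by congr 1; ext x; ring
    _ = (∫ x in Ioc a b, g x) * w b - ∫ x in Ioc a b, g x * ∫ t in Ioc x b, w' t := by
        rw [integral_sub (hg.mul_const _) hgw, integral_mul_const]
        congr 1
        exact setIntegral_congr_fun measurableSet_Ioc fun x hx => by
          rw [ftc_w x (Ioc_subset_Icc_self hx)]
    _ = (v b - v a) * w b - ∫ t in Ioc a b, (v t * w' t - v a * w' t) := by
        rw [setIntegral_mul_setIntegral_Ioc_comm hg hw', ftc_v b ⟨hab, le_rfl⟩]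
        congr 1
        refine setIntegral_congr_fun measurableSet_Ioc fun t ht => ?_
        rw [ftc_v t (Ioc_subset_Icc_self ht)]
        ring
    _ = _ := by
        rw [integral_sub hvw' (hw'.const_mul _), integral_const_mul,
          ftc_w a ⟨le_rfl, hab⟩]
        ring

end IntegrationByParts

namespace IsPeriodicW21

variable {u u'' : ℝ → ℂ}

theorem deriv_one (hu : IsPeriodicW21 u u'') : deriv u 1 = deriv u 0 := by
  simpa [funext hu.1] using (deriv_comp_add_const u 1 0).symm

theorem setIntegral_mul_conj (hu : IsPeriodicW21 u u'') :
    ∫ x in Ioc (0:ℝ) 1, u'' x * conj (u x) = -((∫ x in Ioc (0:ℝ) 1, ‖deriv u x‖ ^ 2 : ℝ) : ℂ) := by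
  have hu'_per := hu.deriv_one
  obtain ⟨hu_per, -, hu_reg, hu_deriv, hu''_int⟩ := hu
  have hu_diff : Differentiable ℝ u := hu_reg.differentiable one_ne_zero
  have hu'_cont : Continuous (deriv u) := hu_reg.continuous_deriv le_rfl
  rw [setIntegral_mul_eq_sub_of_eq_add_integral zero_le_one hu''_int
      (v := deriv u) (w := fun x => conj (u x)) (w' := fun x => conj (deriv u x))
      (fun x _ => hu_deriv x) (fun x _ => (hu_diff x).hasDerivAt.star)
      (hu'_cont.star.integrableOn_Icc.mono_set Ioc_subset_Icc_self),
    hu'_per, show u 1 = u 0 by simpa using hu_per 0, sub_self, zero_sub,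
    ← integral_complex_ofReal]
  simp only [Complex.mul_conj', Complex.ofReal_pow]

theorem setIntegral_weight_mul_conj_eq {a : ℝ → ℝ} {f : ℝ → ℂ} {ξ : ℝ}
    (hu : IsPeriodicW21 u u'') (ha : IntegrableOn a (Ioc 0 1))
    (hode : ∀ᵐ x : ℝ, -u'' x + (ξ : ℂ) * I * (a x : ℂ) * u x = (a x : ℂ) * f x) :
    ∫ x in Ioc (0:ℝ) 1, (a x : ℂ) * (f x * conj (u x))
      = ((∫ x in Ioc (0:ℝ) 1, ‖deriv u x‖ ^ 2 : ℝ) : ℂ)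
        + ξ * I * ((∫ x in Ioc (0:ℝ) 1, a x * ‖u x‖ ^ 2 : ℝ) : ℂ) := by
  have hu_cont : Continuous u := hu.2.2.1.continuous
  have h_u''u : IntegrableOn (fun x => u'' x * conj (u x)) (Ioc 0 1) :=
    hu.2.2.2.2.mul_continuousOn_of_subset (continuous_conj.comp hu_cont).continuousOn
      measurableSet_Ioc isCompact_Icc Ioc_subset_Icc_self
  have h_auu : IntegrableOn (fun x => ((a x * ‖u x‖ ^ 2 : ℝ) : ℂ)) (Ioc 0 1) :=
    (ha.mul_continuousOn_of_subset (hu_cont.norm.pow 2).continuousOn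
      measurableSet_Ioc isCompact_Icc Ioc_subset_Icc_self).ofReal
  have h_pointwise : ∀ᵐ x : ℝ, (a x : ℂ) * (f x * conj (u x))
      = -(u'' x * conj (u x)) + ξ * I * ((a x * ‖u x‖ ^ 2 : ℝ) : ℂ) := by
    filter_upwards [hode] with x hx
    rw [← mul_assoc, ← hx]
    push_cast
    rw [← Complex.mul_conj']
    ring
  rw [integral_congr_ae (ae_restrict_of_ae h_pointwise), integral_add h_u''u.fun_neg
    (h_auu.const_mul _), integral_neg, integral_const_mul, integral_complex_ofReal,
    hu.setIntegral_mul_conj, neg_neg]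

end IsPeriodicW21

theorem norm_integral_weight_mul_conj_le {α : Type*} [MeasurableSpace α] {μ : Measure α}
    {a : α → ℝ} {f g : α → ℂ} {t : ℝ} (ha : 0 ≤ᵐ[μ] a) (ht : 0 < t)
    (hf : Integrable (fun x => a x * ‖f x‖ ^ 2) μ) (hg : Integrable (fun x => a x * ‖g x‖ ^ 2) μ) :
    ‖∫ x, (a x : ℂ) * (f x * conj (g x)) ∂μ‖
      ≤ (t⁻¹ * ∫ x, a x * ‖f x‖ ^ 2 ∂μ + t * ∫ x, a x * ‖g x‖ ^ 2 ∂μ) / 2 := by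
  have amgm : ∀ p q : ℝ, 2 * (p * q) ≤ t⁻¹ * p ^ 2 + t * q ^ 2 := fun p q => by
    have : t⁻¹ * p ^ 2 + t * q ^ 2 - 2 * (p * q) = t⁻¹ * (p - t * q) ^ 2 := by
      field_simp; ring
    nlinarith [mul_nonneg (inv_nonneg.2 ht.le) (sq_nonneg (p - t * q))]
  calc ‖∫ x, (a x : ℂ) * (f x * conj (g x)) ∂μ‖
      ≤ ∫ x, (t⁻¹ * (a x * ‖f x‖ ^ 2) + t * (a x * ‖g x‖ ^ 2)) / 2 ∂μ := by
        refine norm_integral_le_of_norm_le (((hf.const_mul _).add (hg.const_mul _)).div_const _) ?_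
        filter_upwards [ha] with x hx
        rw [norm_mul, norm_mul, RCLike.norm_conj, Complex.norm_real, Real.norm_of_nonneg hx]
        nlinarith [mul_le_mul_of_nonneg_left (amgm ‖f x‖ ‖g x‖) hx]
    _ = _ := by
        rw [integral_div, integral_add (hf.const_mul _) (hg.const_mul _), integral_const_mul,
          integral_const_mul]

theorem add_le_of_norm_ofReal_add_mul_I_le {A B F ξ : ℝ} (hξ : 1 ≤ |ξ|) (hA : 0 ≤ A)
    (h : ‖(B : ℂ) + ξ * I * A‖ ≤ (|ξ|⁻¹ * F + |ξ| * A) / 2) :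
    A + B ≤ 2 * |ξ|⁻¹ * F := by
  have hre : B ≤ ‖(B : ℂ) + ξ * I * A‖ := by
    simpa using Complex.re_le_norm ((B : ℂ) + ξ * I * A)
  have him : |ξ| * A ≤ ‖(B : ℂ) + ξ * I * A‖ := by
    simpa [abs_mul, abs_of_nonneg hA] using Complex.abs_im_le_norm ((B : ℂ) + ξ * I * A)
  have hξ0 : 0 < |ξ| := one_pos.trans_le hξ
  have hinv : |ξ|⁻¹ * |ξ| = 1 := inv_mul_cancel₀ hξ0.ne'
  have hinv_le : |ξ|⁻¹ ≤ 1 := inv_le_one_of_one_le₀ hξ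
  have hξA : |ξ| * A ≤ |ξ|⁻¹ * F := by linarith
  have hA_le : A ≤ |ξ|⁻¹ * F := by
    have : A = |ξ|⁻¹ * (|ξ| * A) := by rw [← mul_assoc, hinv, one_mul]
    nlinarith [mul_nonneg hξ0.le hA]
  linarith

theorem sq_integral_le_integral_sq {α : Type*} [MeasurableSpace α] {μ : Measure α}
    [IsProbabilityMeasure μ] {g : α → ℝ} (hg : MemLp g 2 μ) :
    (∫ x, g x ∂μ) ^ 2 ≤ ∫ x, g x ^ 2 ∂μ := by
  have := ProbabilityTheory.variance_nonneg g μ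
  rw [ProbabilityTheory.variance_eq_sub hg] at this
  simpa using this

theorem norm_sub_le_setIntegral_norm_deriv {E : Type*} [NormedAddCommGroup E] [NormedSpace ℝ E]
    {u : ℝ → E} (hu : ContDiff ℝ 1 u) {a b x y : ℝ} (hx : x ∈ Icc a b) (hy : y ∈ Icc a b) :
    ‖u x - u y‖ ≤ ∫ t in Ioc a b, ‖deriv u t‖ := by
  wlog hyx : y ≤ x generalizing x y
  · rw [norm_sub_rev]; exact this hy hx (le_of_not_ge hyx)
  have hu' : Continuous fun t => ‖deriv u t‖ := (hu.continuous_deriv le_rfl).norm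
  calc ‖u x - u y‖ ≤ ∫ t in y..x, ‖deriv u t‖ :=
        norm_sub_le_integral_of_norm_deriv_le_of_le hyx hu.continuous.continuousOn
          (hu.differentiable one_ne_zero).differentiableOn (ae_of_all _ fun _ _ => le_rfl)
          (hu'.intervalIntegrable _ _)
    _ = ∫ t in Ioc y x, ‖deriv u t‖ := intervalIntegral.integral_of_le hyx
    _ ≤ ∫ t in Ioc a b, ‖deriv u t‖ :=
        setIntegral_mono_set hu'.integrableOn_Ioc (ae_of_all _ fun _ => norm_nonneg _)
          (Ioc_subset_Ioc hy.1 hx.2).eventuallyLE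

theorem setIntegral_norm_sq_le_of_weight {a : ℝ → ℝ} (ha0 : ∀ᵐ x, 0 ≤ a x)
    (ha : IntegrableOn a (Ioc 0 1)) (ha1 : ∫ x in Ioc (0:ℝ) 1, a x = 1) {u : ℝ → ℂ}
    (hu : ContDiff ℝ 1 u) :
    ∫ x in Ioc (0:ℝ) 1, ‖u x‖ ^ 2
      ≤ 2 * ((∫ x in Ioc (0:ℝ) 1, a x * ‖u x‖ ^ 2) + ∫ x in Ioc (0:ℝ) 1, ‖deriv u x‖ ^ 2) := by
  have : IsProbabilityMeasure (volume.restrict (Ioc (0:ℝ) 1)) := ⟨by simp⟩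
  have hu' : Continuous fun t => ‖deriv u t‖ := (hu.continuous_deriv le_rfl).norm
  obtain ⟨y, hy, hy_min⟩ := isCompact_Icc.exists_isMinOn (nonempty_Icc.2 zero_le_one)
    hu.continuous.norm.continuousOn
  have h_uy : ‖u y‖ ^ 2 ≤ ∫ x in Ioc (0:ℝ) 1, a x * ‖u x‖ ^ 2 := by
    calc ‖u y‖ ^ 2 = ∫ x in Ioc (0:ℝ) 1, a x * ‖u y‖ ^ 2 := by
          rw [integral_mul_const, ha1, one_mul]
      _ ≤ _ := by
          refine integral_mono_ae (ha.mul_const _) (ha.mul_continuousOn_of_subset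
            (hu.continuous.norm.pow 2).continuousOn measurableSet_Ioc isCompact_Icc
            Ioc_subset_Icc_self) ?_
          filter_upwards [ae_restrict_of_ae ha0, ae_restrict_mem measurableSet_Ioc] with x hx hx'
          exact mul_le_mul_of_nonneg_left (pow_le_pow_left₀ (norm_nonneg _)
            (hy_min (Ioc_subset_Icc_self hx')) 2) hx
  have h_u' : (∫ x in Ioc (0:ℝ) 1, ‖deriv u x‖) ^ 2 ≤ ∫ x in Ioc (0:ℝ) 1, ‖deriv u x‖ ^ 2 :=
    sq_integral_le_integral_sq ((memLp_two_iff_integrable_sq hu'.aestronglyMeasurable).2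
      (hu'.pow 2).integrableOn_Ioc)
  have h_pointwise : ∀ x ∈ Ioc (0:ℝ) 1, ‖u x‖ ^ 2
      ≤ 2 * ((∫ x in Ioc (0:ℝ) 1, a x * ‖u x‖ ^ 2) + ∫ x in Ioc (0:ℝ) 1, ‖deriv u x‖ ^ 2) := by
    intro x hx
    have h_diff := (norm_sub_norm_le (u x) (u y)).trans
      (norm_sub_le_setIntegral_norm_deriv hu (Ioc_subset_Icc_self hx) hy)
    nlinarith [norm_nonneg (u x), norm_nonneg (u y),
      sq_nonneg (‖u y‖ - ∫ x in Ioc (0:ℝ) 1, ‖deriv u x‖)]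
  calc ∫ x in Ioc (0:ℝ) 1, ‖u x‖ ^ 2
      ≤ ∫ _ in Ioc (0:ℝ) 1, 2 * ((∫ x in Ioc (0:ℝ) 1, a x * ‖u x‖ ^ 2)
          + ∫ x in Ioc (0:ℝ) 1, ‖deriv u x‖ ^ 2) :=
        setIntegral_mono_on (hu.continuous.norm.pow 2).integrableOn_Ioc
          (integrableOn_const measure_Ioc_lt_top.ne)
          measurableSet_Ioc h_pointwise
    _ = _ := by simp

theorem IsPeriodicW21.energy_le {a : ℝ → ℝ} (ha : MemA a) {ξ : ℝ} (hξ : 1 ≤ |ξ|)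
    {f : ℝ → ℂ} (hfm : Measurable f) (hfb : ∃ M, ∀ x, ‖f x‖ ≤ M) {u u'' : ℝ → ℂ}
    (hu : IsPeriodicW21 u u'')
    (hode : ∀ᵐ x : ℝ, -u'' x + (ξ : ℂ) * I * (a x : ℂ) * u x = (a x : ℂ) * f x) :
    (∫ x in Ioc (0:ℝ) 1, a x * ‖u x‖ ^ 2) + ∫ x in Ioc (0:ℝ) 1, ‖deriv u x‖ ^ 2
      ≤ 2 * |ξ|⁻¹ * seminormA a f ^ 2 := by
  obtain ⟨-, -, ha0, ha_int, -⟩ := ha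
  obtain ⟨M, hM⟩ := hfb
  have h_af : IntegrableOn (fun x => a x * ‖f x‖ ^ 2) (Ioc 0 1) :=
    ha_int.mul_bdd (hfm.norm.pow_const 2).aestronglyMeasurable
      (ae_of_all _ fun x => by simpa using pow_le_pow_left₀ (norm_nonneg _) (hM x) 2)
  have h_au : IntegrableOn (fun x => a x * ‖u x‖ ^ 2) (Ioc 0 1) :=
    ha_int.mul_continuousOn_of_subset (hu.2.2.1.continuous.norm.pow 2).continuousOn
      measurableSet_Ioc isCompact_Icc Ioc_subset_Icc_self
  have ha0' : 0 ≤ᵐ[volume.restrict (Ioc (0:ℝ) 1)] a := ae_restrict_of_ae ha0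
  rw [seminormA, Real.sq_sqrt (integral_nonneg_of_ae (ha0'.mono fun x hx =>
    mul_nonneg hx (sq_nonneg ‖f x‖)))]
  refine add_le_of_norm_ofReal_add_mul_I_le hξ
    (integral_nonneg_of_ae (ha0'.mono fun x hx => mul_nonneg hx (sq_nonneg ‖u x‖))) ?_
  rw [← hu.setIntegral_weight_mul_conj_eq ha_int hode]
  exact norm_integral_weight_mul_conj_le ha0' (one_pos.trans_le hξ) h_af h_au

theorem sqrt_le_sqrt_mul_abs_rpow_neg_half_mul {S c ξ F : ℝ} (hc : 0 ≤ c) (hF : 0 ≤ F)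
    (hS : S ≤ c * |ξ|⁻¹ * F ^ 2) :
    √S ≤ √c * |ξ| ^ (-(1/2 : ℝ)) * F := by
  calc √S ≤ √(c * |ξ|⁻¹ * F ^ 2) := Real.sqrt_le_sqrt hS
    _ = √c * |ξ| ^ (-(1/2 : ℝ)) * F := by
        rw [Real.sqrt_mul (by positivity), Real.sqrt_mul hc, Real.sqrt_sq hF, Real.sqrt_inv,
          Real.rpow_neg (abs_nonneg ξ), ← Real.sqrt_eq_rpow]

/-- for `a ∈ 𝒜`, `|ξ| ≥ 1` and `f : 𝕋 → ℂ` bounded measurable,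
any periodic `W^{2,1}` solution of `-u'' + iξ a u = a f` satisfies
`‖u‖_{H¹_a} ≤ √2 |ξ|^{-1/2} [f]_a`; consequently, there is a constant `C`,
independent of `a`, `ξ` and `f`, with `‖u‖_{H¹} ≤ C |ξ|^{-1/2} [f]_a`. -/
theorem statement_10 :
    (∀ (a : ℝ → ℝ), MemA a → ∀ (ξ : ℝ), 1 ≤ |ξ| →
      ∀ (f : ℝ → ℂ), (∀ x, f (x + 1) = f x) → Measurable f →
        (∃ M, ∀ x, ‖f x‖ ≤ M) →
      ∀ (u u'' : ℝ → ℂ), IsPeriodicW21 u u'' →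
      (∀ᵐ x : ℝ,
        -u'' x + (ξ : ℂ) * Complex.I * (a x : ℂ) * u x = (a x : ℂ) * f x) →
      Real.sqrt ((∫ x in Ioc (0:ℝ) 1, ‖deriv u x‖ ^ 2)
          + (∫ x in Ioc (0:ℝ) 1, a x * ‖u x‖ ^ 2))
        ≤ Real.sqrt 2 * |ξ| ^ (-(1/2 : ℝ)) * seminormA a f) ∧
    (∃ C : ℝ, 0 < C ∧
      ∀ (a : ℝ → ℝ), MemA a → ∀ (ξ : ℝ), 1 ≤ |ξ| →
      ∀ (f : ℝ → ℂ), (∀ x, f (x + 1) = f x) → Measurable f →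
        (∃ M, ∀ x, ‖f x‖ ≤ M) →
      ∀ (u u'' : ℝ → ℂ), IsPeriodicW21 u u'' →
      (∀ᵐ x : ℝ,
        -u'' x + (ξ : ℂ) * Complex.I * (a x : ℂ) * u x = (a x : ℂ) * f x) →
      Real.sqrt ((∫ x in Ioc (0:ℝ) 1, ‖deriv u x‖ ^ 2)
          + (∫ x in Ioc (0:ℝ) 1, ‖u x‖ ^ 2))
        ≤ C * |ξ| ^ (-(1/2 : ℝ)) * seminormA a f) := by
  constructor
  · intro a ha ξ hξ f _ hfm hfb u u'' hu hode
    refine sqrt_le_sqrt_mul_abs_rpow_neg_half_mul zero_le_two (Real.sqrt_nonneg _) ?_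
    linarith [hu.energy_le ha hξ hfm hfb hode]
  · refine ⟨√6, by positivity, fun a ha ξ hξ f _ hfm hfb u u'' hu hode => ?_⟩
    have h_energy := hu.energy_le ha hξ hfm hfb hode
    have h_poincare := setIntegral_norm_sq_le_of_weight ha.2.2.1 ha.2.2.2.1 ha.2.2.2.2 hu.2.2.1
    have h_au : 0 ≤ ∫ x in Ioc (0:ℝ) 1, a x * ‖u x‖ ^ 2 :=
      integral_nonneg_of_ae (ae_restrict_of_ae (ha.2.2.1.mono fun x hx =>
        mul_nonneg hx (sq_nonneg ‖u x‖)))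
    refine sqrt_le_sqrt_mul_abs_rpow_neg_half_mul (by norm_num) (Real.sqrt_nonneg _) ?_
    linarith
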